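/- Let f, g : ℝ → ℝ be integrable on [0,1] with ∫_0^1 f(t) dt = 1 and ∫_0^1 g(t) dt = 1, and let c be a real constant. Then for every y ∈ [0,1]: ∫_0^y c·[(∫_0^x g(t) dt)·(∫_x^1 f(t) dt) − (∫_0^x f(t) dt)·(∫_x^1 g(t) dt)] dx = c·∫_0^y (∫_x^1 f(t) dt − ∫_x^1 g(t) dt) dx. -/

import Mathlib

open MeasureTheory intervalIntegral

theorem intervalIntegral.integral_add_integral_of_mem_uIcc {E : Type*} [NormedAddCommGroup E]
    [NormedSpace ℝ E] {μ : Measure ℝ} {f : ℝ → E} {a b x : ℝ}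
    (hf : IntervalIntegrable f μ a b) (hx : x ∈ Set.uIcc a b) :
    (∫ t in a..x, f t ∂μ) + ∫ t in x..b, f t ∂μ = ∫ t in a..b, f t ∂μ :=
  integral_add_adjacent_intervals (hf.mono_set (Set.uIcc_subset_uIcc_left hx))
    (hf.mono_set (Set.uIcc_subset_uIcc_right hx))

theorem mul_sub_mul_eq_sub_of_add_eq_one {R : Type*} [CommRing R] {a b c d : R}
    (hab : a + b = 1) (hcd : c + d = 1) : c * b - a * d = b - d := by
  linear_combination b * hcd - d * hab

/-- For probability densities `f` and `g` on `[0,1]` and a constant `c`,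
`∫₀ʸ c·[(∫₀ˣ g)(∫ₓ¹ f) - (∫₀ˣ f)(∫ₓ¹ g)] dx = c · ∫₀ʸ (∫ₓ¹ f - ∫ₓ¹ g) dx`. -/
theorem sgan_optimal_discriminator (f g : ℝ → ℝ) (c : ℝ)
    (hf : IntervalIntegrable f volume 0 1)
    (hg : IntervalIntegrable g volume 0 1)
    (hf1 : (∫ t in (0:ℝ)..1, f t) = 1)
    (hg1 : (∫ t in (0:ℝ)..1, g t) = 1) :
    ∀ y ∈ Set.Icc (0:ℝ) 1,
      (∫ x in (0:ℝ)..y,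
          c * ((∫ t in (0:ℝ)..x, g t) * (∫ t in x..(1:ℝ), f t) -
                (∫ t in (0:ℝ)..x, f t) * (∫ t in x..(1:ℝ), g t))) =
        c * ∫ x in (0:ℝ)..y,
          ((∫ t in x..(1:ℝ), f t) - (∫ t in x..(1:ℝ), g t)) := by
  intro y hy
  rw [← intervalIntegral.integral_const_mul]
  refine integral_congr fun x hx => ?_
  have hx₁ : x ∈ Set.uIcc (0:ℝ) 1 :=
    Set.uIcc_subset_uIcc_left (Set.Icc_subset_uIcc hy) hx
  have hF := (integral_add_integral_of_mem_uIcc hf hx₁).trans hf1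
  have hG := (integral_add_integral_of_mem_uIcc hg hx₁).trans hg1
  exact congrArg (c * ·) (mul_sub_mul_eq_sub_of_add_eq_one hF hG)
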